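/- arXiv:2112.12368 — 3 statements merged into one kernel-verified Lean document; each statement's English description precedes it below -/
import Mathlib

section
/- Let 𝓥(A,B,C) ⊆ [−1,0]^n be as in Example 5.9 (for (A,B,C) ∈ Part₃(n) with b = #B: coordinates in A lie in [−1, −1+3^{−(b+1)}], coordinates in B lie in [−1+2·3^{−(b+1)}, −2·3^{−(b+1)}], coordinates in C lie in [−3^{−(b+1)}, 0]). Let (A,B,C) ∈ Part₃(m−1) with B = {j₁ < … < j_b}, let (D,E,F) ∈ Part₃(b), and set (A′,B′,C′) = (A ∪ {j_i : i∈D}, {j_i : i∈E}, C ∪ {j_i : i∈F}). Then 𝓘_{A,B,C}^{−1}(𝓥(A′,B′,C′)) = 𝓥(D,E,F). -/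
/-- The increasing enumeration of a `b`-element subset `B` of `Fin n`. -/
noncomputable def finsetEmb {n b : ℕ} (B : Finset (Fin n)) (hB : B.card = b) :
    Fin b → Fin n :=
  fun k => (B.orderIsoOfFin hB k : Fin n)

/-- The face embedding `𝓘_{A,B,C} : ℝ^b → ℝ^n`. -/
noncomputable def faceEmb {n b : ℕ} (A B C : Finset (Fin n)) (hB : B.card = b) :
    (Fin b → ℝ) → Fin n → ℝ :=
  fun t i =>
    if i ∈ A then -1
    else if h : i ∈ B then t ((B.orderIsoOfFin hB).symm ⟨i, h⟩)
    else 0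

/-- The closed subset `𝓥(A,B,C) ⊆ [−1,0]^n` of Example 5.9. -/
def calV {n : ℕ} (A B C : Finset (Fin n)) : Set (Fin n → ℝ) :=
  {t | ∀ i : Fin n,
    (i ∈ A → t i ∈ Set.Icc (-1 : ℝ) (-1 + ((3 : ℝ) ^ (B.card + 1))⁻¹)) ∧
    (i ∈ B → t i ∈ Set.Icc (-1 + 2 * ((3 : ℝ) ^ (B.card + 1))⁻¹)
                          (-(2 * ((3 : ℝ) ^ (B.card + 1))⁻¹))) ∧
    (i ∈ C → t i ∈ Set.Icc (-((3 : ℝ) ^ (B.card + 1))⁻¹) 0)}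

lemma finsetEmb_injective {n b : ℕ} (B : Finset (Fin n)) (hB : B.card = b) :
    Function.Injective (finsetEmb B hB) := fun x y h =>
  (B.orderIsoOfFin hB).injective (Subtype.coe_injective h)

lemma finsetEmb_mem {n b : ℕ} (B : Finset (Fin n)) (hB : B.card = b) (k : Fin b) :
    finsetEmb B hB k ∈ B := (B.orderIsoOfFin hB k).2

lemma faceEmb_apply_finsetEmb {n b : ℕ} (A B C : Finset (Fin n)) (hB : B.card = b)
    (hAB : Disjoint A B) (t : Fin b → ℝ) (k : Fin b) :
    faceEmb A B C hB t (finsetEmb B hB k) = t k := by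
  have hk : finsetEmb B hB k ∈ B := finsetEmb_mem B hB k
  have hkA : finsetEmb B hB k ∉ A := fun hc => (Finset.disjoint_left.mp hAB hc) hk
  simp only [faceEmb, if_neg hkA, dif_pos hk]
  congr 1
  rw [OrderIso.symm_apply_eq]
  exact Subtype.ext rfl

/-- Compatibility property (2) of Definition 5.7 for Example 5.9:
`𝓘_{A,B,C}⁻¹(𝓥(A′,B′,C′)) = 𝓥(D,E,F)` where
`(A′,B′,C′) = (A ∪ j(D), j(E), C ∪ j(F))` and `j` is the increasing
enumeration of `B`. -/
theorem calV_preimage_faceEmb {n b : ℕ}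
    (A B C : Finset (Fin n))
    (hAB : Disjoint A B) (hAC : Disjoint A C) (hBC : Disjoint B C)
    (hABC : A ∪ B ∪ C = Finset.univ) (hB : B.card = b)
    (D E F : Finset (Fin b))
    (hDE : Disjoint D E) (hDF : Disjoint D F) (hEF : Disjoint E F)
    (hDEF : D ∪ E ∪ F = Finset.univ) :
    faceEmb A B C hB ⁻¹'
        (calV (A ∪ D.image (finsetEmb B hB)) (E.image (finsetEmb B hB))
          (C ∪ F.image (finsetEmb B hB)))
      = calV D E F := by
  have hcard : (E.image (finsetEmb B hB)).card = E.card :=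
    Finset.card_image_of_injective _ (finsetEmb_injective B hB)
  have h3 : (0:ℝ) < ((3:ℝ) ^ (E.card + 1))⁻¹ := by positivity
  ext t
  simp only [Set.mem_preimage, calV, Set.mem_setOf_eq, hcard]
  constructor
  · intro h k
    have hk := h (finsetEmb B hB k)
    rw [faceEmb_apply_finsetEmb A B C hB hAB] at hk
    refine ⟨fun hkD => hk.1 ?_, fun hkE => hk.2.1 ?_, fun hkF => hk.2.2 ?_⟩
    · exact Finset.mem_union_right _ (Finset.mem_image_of_mem _ hkD)
    · exact Finset.mem_image_of_mem _ hkE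
    · exact Finset.mem_union_right _ (Finset.mem_image_of_mem _ hkF)
  · intro h i
    refine ⟨?_, ?_, ?_⟩
    · intro hi
      rcases Finset.mem_union.mp hi with hiA | hiD
      · simp only [faceEmb, if_pos hiA]
        constructor <;> linarith
      · obtain ⟨k, hkD, rfl⟩ := Finset.mem_image.mp hiD
        rw [faceEmb_apply_finsetEmb A B C hB hAB]
        exact (h k).1 hkD
    · intro hi
      obtain ⟨k, hkE, rfl⟩ := Finset.mem_image.mp hi
      rw [faceEmb_apply_finsetEmb A B C hB hAB]
      exact (h k).2.1 hkE
    · intro hi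
      rcases Finset.mem_union.mp hi with hiC | hiF
      · have hiA : i ∉ A := fun hc => (Finset.disjoint_left.mp hAC hc) hiC
        have hiB : i ∉ B := fun hc => (Finset.disjoint_left.mp hBC hc) hiC
        simp only [faceEmb, if_neg hiA, dif_neg hiB]
        constructor <;> linarith
      · obtain ⟨k, hkF, rfl⟩ := Finset.mem_image.mp hiF
        rw [faceEmb_apply_finsetEmb A B C hB hAB]
        exact (h k).2.2 hkF
end

section
/- Let 𝓥(A,B,C) ⊆ [−1,0]^n be as in Example 5.9 of the paper. Suppose (A,B,C), (A′,B′,C′) ∈ Part₃(n) satisfy 𝓥(A,B,C) ∩ 𝓥(A′,B′,C′) ≠ ∅ and #B ≤ #B′. Then A′ ⊆ A and C′ ⊆ C. In particular, Im(𝓘_{A,B,C}) ⊆ Im(𝓘_{A′,B′,C′}), i.e. the face of the cube determined by (A,B,C) is a face of the face determined by (A′,B′,C′). -/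
/-- The face of the cube `[−1,0]^n` determined by `A` (coordinates fixed to
`−1`) and `C` (coordinates fixed to `0`); this is the image of `𝓘_{A,B,C}`. -/
def face {n : ℕ} (A C : Finset (Fin n)) : Set (Fin n → ℝ) :=
  {s | (∀ i, s i ∈ Set.Icc (-1 : ℝ) 0) ∧ (∀ i ∈ A, s i = -1) ∧ (∀ i ∈ C, s i = 0)}

/-- Property (4) of Definition 5.7 for Example 5.9: if
`𝓥(A,B,C) ∩ 𝓥(A′,B′,C′) ≠ ∅` and `#B ≤ #B′`, then `A′ ⊆ A`, `C′ ⊆ C`, and the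
face determined by `(A,B,C)` is a face of the face determined by `(A′,B′,C′)`. -/
theorem calV_overlap_nested_faces {n : ℕ}
    (A B C A' B' C' : Finset (Fin n))
    (hAB : Disjoint A B) (hAC : Disjoint A C) (hBC : Disjoint B C)
    (hABC : A ∪ B ∪ C = Finset.univ)
    (hAB' : Disjoint A' B') (hAC' : Disjoint A' C') (hBC' : Disjoint B' C')
    (hABC' : A' ∪ B' ∪ C' = Finset.univ)
    (hne : (calV A B C ∩ calV A' B' C').Nonempty)
    (hcard : B.card ≤ B'.card) :
    A' ⊆ A ∧ C' ⊆ C ∧ face A C ⊆ face A' C' := by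
  obtain ⟨t, ht, ht'⟩ := hne
  set x : ℝ := ((3 : ℝ) ^ (B.card + 1))⁻¹ with hx
  set x' : ℝ := ((3 : ℝ) ^ (B'.card + 1))⁻¹ with hx'
  have hxpos : 0 < x := by positivity
  have hx'pos : 0 < x' := by positivity
  have hx'le : x' ≤ x := by
    apply inv_anti₀ (by positivity)
    exact pow_le_pow_right₀ (by norm_num) (by omega)
  have hxle : x ≤ 1 / 3 := by
    rw [hx]
    rw [show (1:ℝ)/3 = ((3:ℝ)^1)⁻¹ by norm_num]
    apply inv_anti₀ (by positivity)
    exact pow_le_pow_right₀ (by norm_num) (by omega)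
  have hA'A : A' ⊆ A := by
    intro i hi
    have h1 := (ht' i).1 hi
    have hiu : i ∈ A ∪ B ∪ C := hABC ▸ Finset.mem_univ i
    rcases Finset.mem_union.1 hiu with h | hC
    · rcases Finset.mem_union.1 h with hA | hB
      · exact hA
      · exfalso
        have h2 := (ht i).2.1 hB
        have : -1 + 2 * x ≤ -1 + x' := le_trans h2.1 h1.2
        linarith
    · exfalso
      have h2 := (ht i).2.2 hC
      have : -x ≤ -1 + x' := le_trans h2.1 h1.2
      linarith
  have hC'C : C' ⊆ C := by
    intro i hi
    have h1 := (ht' i).2.2 hi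
    have hiu : i ∈ A ∪ B ∪ C := hABC ▸ Finset.mem_univ i
    rcases Finset.mem_union.1 hiu with h | hC
    · rcases Finset.mem_union.1 h with hA | hB
      · exfalso
        have h2 := (ht i).1 hA
        have : -x' ≤ -1 + x := le_trans h1.1 h2.2
        linarith
      · exfalso
        have h2 := (ht i).2.1 hB
        have : -x' ≤ -(2 * x) := le_trans h1.1 h2.2
        linarith
    · exact hC
  refine ⟨hA'A, hC'C, ?_⟩
  rintro s ⟨hs0, hsA, hsC⟩
  exact ⟨hs0, fun i hi => hsA i (hA'A hi), fun i hi => hsC i (hC'C hi)⟩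
end

section
/- Let 𝓥(A,B,C) ⊆ [−1,0]^n be the sets of Example 5.9 of the paper. Then the union over all (A,B,C) ∈ Part₃(n) of the interiors of 𝓥(A,B,C) relative to [−1,0]^n equals [−1,0]^n. -/
/-- Covering property (1) of Definition 5.7 for Example 5.9: the interiors of
the sets `𝓥(A,B,C)` relative to the cube `[−1,0]^n`, taken over all partitions
`(A,B,C) ∈ Part₃(n)`, cover the whole cube. -/
theorem calV_interiors_cover (n : ℕ) :
    (⋃ (A : Finset (Fin n)) (B : Finset (Fin n)) (C : Finset (Fin n))
        (_ : Disjoint A B) (_ : Disjoint A C) (_ : Disjoint B C)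
        (_ : A ∪ B ∪ C = Finset.univ),
        interior {t : Fin n → Set.Icc (-1 : ℝ) 0 |
          (fun i => (t i : ℝ)) ∈ calV A B C})
      = Set.univ := by
  apply Set.eq_univ_of_forall
  intro t
  have hT1 : ∀ i, (-1:ℝ) ≤ (t i : ℝ) := fun i => (t i).2.1
  have hT0 : ∀ i, ((t i : ℝ)) ≤ 0 := fun i => (t i).2.2
  have hεpos : ∀ b : ℕ, (0:ℝ) < ((3:ℝ)^(b+1))⁻¹ := fun b => by positivity
  have hεle : ∀ b : ℕ, ((3:ℝ)^(b+1))⁻¹ ≤ 1/3 := by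
    intro b
    have h3 : (3:ℝ) ≤ 3^(b+1) := le_self_pow₀ (by norm_num) (by omega)
    calc ((3:ℝ)^(b+1))⁻¹ ≤ (3:ℝ)⁻¹ := by gcongr
      _ = 1/3 := by norm_num
  have hεsucc : ∀ b : ℕ, ((3:ℝ)^(b+1+1))⁻¹ = ((3:ℝ)^(b+1))⁻¹ / 3 := by
    intro b
    rw [pow_succ, mul_inv, div_eq_mul_inv]
  classical
  -- the filtered sets
  set F : ℕ → Finset (Fin n) := fun b => Finset.univ.filter
    (fun i => -1 + 2*((3:ℝ)^(b+1))⁻¹ < (t i : ℝ) ∧ (t i : ℝ) < -(2*((3:ℝ)^(b+1))⁻¹)) with hF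
  have hFmem : ∀ b i, i ∈ F b ↔
      (-1 + 2*((3:ℝ)^(b+1))⁻¹ < (t i : ℝ) ∧ (t i : ℝ) < -(2*((3:ℝ)^(b+1))⁻¹)) := by
    intro b i; simp [hF]
  have hFmono : ∀ b, F b ⊆ F (b+1) := by
    intro b i hi
    rw [hFmem] at hi ⊢
    have h1 := hεpos b
    have h2 := hεsucc b
    constructor <;> [linarith [hi.1]; linarith [hi.2]]
  have hexists : ∃ b, (F (b+1)).card ≤ b :=
    ⟨n, le_trans (Finset.card_le_univ _) (by simp)⟩
  set b := Nat.find hexists with hbdef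
  have hb1 : (F (b+1)).card ≤ b := Nat.find_spec hexists
  have hbmin : ∀ b' < b, b' < (F (b'+1)).card := by
    intro b' hb'
    exact lt_of_not_ge (Nat.find_min hexists hb')
  have hfb : b ≤ (F b).card := by
    rcases Nat.eq_zero_or_pos b with h | h
    · simp [h]
    · have h1 := hbmin (b-1) (Nat.sub_lt h one_pos)
      have h2 : b - 1 + 1 = b := Nat.succ_pred_eq_of_pos h
      rw [h2] at h1
      omega
  have hFeq : F b = F (b+1) :=
    Finset.eq_of_subset_of_card_le (hFmono b) (le_trans hb1 hfb)
  have hcard : (F b).card = b :=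
    le_antisymm (by rw [hFeq]; exact hb1) hfb
  -- abbreviate ε
  set e : ℝ := ((3:ℝ)^(b+1))⁻¹ with hedef
  have hepos : 0 < e := hεpos b
  have hele : e ≤ 1/3 := hεle b
  have hesucc : ((3:ℝ)^(b+1+1))⁻¹ = e / 3 := hεsucc b
  -- gap-free
  have hgap : ∀ i, (t i : ℝ) < -1 + e ∨
      (-1 + 2*e < (t i : ℝ) ∧ (t i : ℝ) < -(2*e)) ∨ -e < (t i : ℝ) := by
    intro i
    by_contra hc
    push_neg at hc
    obtain ⟨h1, h2, h3⟩ := hc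
    have hnotFb : i ∉ F b := by
      rw [hFmem]
      intro hmem
      rcases le_or_gt (t i : ℝ) (-1 + 2*e) with h | h
      · exact absurd hmem.1 (not_lt.mpr h)
      · exact absurd hmem.2 (not_lt.mpr (h2 h))
    have hinFb1 : i ∈ F (b+1) := by
      rw [hFmem, hesucc]
      rcases le_or_gt (t i : ℝ) (-1 + 2*e) with h | h
      · -- left gap: -1 + e ≤ t i ≤ -1 + 2e
        constructor <;> linarith
      · -- right gap: -2e ≤ t i ≤ -e
        have h4 : -(2*e) ≤ (t i : ℝ) := h2 h
        constructor <;> linarith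
    rw [← hFeq] at hinFb1
    exact hnotFb hinFb1
  -- the partition
  set A : Finset (Fin n) := Finset.univ.filter (fun i => (t i : ℝ) < -1 + e) with hA
  set B : Finset (Fin n) := F b with hB
  set C : Finset (Fin n) := Finset.univ.filter (fun i => -e < (t i : ℝ)) with hC
  have hAmem : ∀ i, i ∈ A ↔ (t i : ℝ) < -1 + e := by intro i; simp [hA]
  have hBmem : ∀ i, i ∈ B ↔ (-1 + 2*e < (t i : ℝ) ∧ (t i : ℝ) < -(2*e)) := by
    intro i; rw [hB, hFmem]
  have hCmem : ∀ i, i ∈ C ↔ -e < (t i : ℝ) := by intro i; simp [hC]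
  have hBcard : B.card = b := hcard
  have hAB : Disjoint A B := by
    rw [Finset.disjoint_left]
    intro i hiA hiB
    rw [hAmem] at hiA; rw [hBmem] at hiB
    linarith [hiB.1]
  have hAC : Disjoint A C := by
    rw [Finset.disjoint_left]
    intro i hiA hiC
    rw [hAmem] at hiA; rw [hCmem] at hiC
    linarith
  have hBC : Disjoint B C := by
    rw [Finset.disjoint_left]
    intro i hiB hiC
    rw [hBmem] at hiB; rw [hCmem] at hiC
    linarith [hiB.2]
  have hUnion : A ∪ B ∪ C = Finset.univ := by
    apply Finset.eq_univ_of_forall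
    intro i
    simp only [Finset.mem_union]
    rcases hgap i with h | h | h
    · exact Or.inl (Or.inl ((hAmem i).mpr h))
    · exact Or.inl (Or.inr ((hBmem i).mpr h))
    · exact Or.inr ((hCmem i).mpr h)
  simp only [Set.mem_iUnion]
  refine ⟨A, B, C, hAB, hAC, hBC, hUnion, ?_⟩
  -- interior membership
  rw [mem_interior]
  refine ⟨{t' : Fin n → Set.Icc (-1:ℝ) 0 | ∀ i,
      (i ∈ A → (t' i : ℝ) < -1 + e) ∧
      (i ∈ B → (-1 + 2*e < (t' i : ℝ) ∧ (t' i : ℝ) < -(2*e))) ∧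
      (i ∈ C → -e < (t' i : ℝ))}, ?_, ?_, ?_⟩
  · -- subset of calV pullback
    intro t' ht'
    intro i
    obtain ⟨hA', hB', hC'⟩ := ht' i
    have hecard : ((3:ℝ) ^ (B.card + 1))⁻¹ = e := by rw [hBcard]
    refine ⟨fun hi => ?_, fun hi => ?_, fun hi => ?_⟩
    · rw [hecard]; exact ⟨(t' i).2.1, le_of_lt (hA' hi)⟩
    · rw [hecard]; exact ⟨le_of_lt (hB' hi).1, le_of_lt (hB' hi).2⟩
    · rw [hecard]; exact ⟨le_of_lt (hC' hi), (t' i).2.2⟩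
  · -- open
    have hrw : {t' : Fin n → Set.Icc (-1:ℝ) 0 | ∀ i,
        (i ∈ A → (t' i : ℝ) < -1 + e) ∧
        (i ∈ B → (-1 + 2*e < (t' i : ℝ) ∧ (t' i : ℝ) < -(2*e))) ∧
        (i ∈ C → -e < (t' i : ℝ))} =
        ⋂ i : Fin n, (fun t' : Fin n → Set.Icc (-1:ℝ) 0 => t' i) ⁻¹'
          {x : Set.Icc (-1:ℝ) 0 |
            (i ∈ A → (x : ℝ) < -1 + e) ∧
            (i ∈ B → (-1 + 2*e < (x : ℝ) ∧ (x : ℝ) < -(2*e))) ∧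
            (i ∈ C → -e < (x : ℝ))} := by
      ext t'; simp [Set.mem_iInter]
    rw [hrw]
    apply isOpen_iInter_of_finite
    intro i
    apply IsOpen.preimage (continuous_apply i)
    have hop : ∀ (p : Prop) (s : Set (Set.Icc (-1:ℝ) 0)), IsOpen s →
        IsOpen {x : Set.Icc (-1:ℝ) 0 | p → x ∈ s} := by
      intro p s hs
      by_cases hp : p
      · simpa [hp] using hs
      · simp only [hp]
        convert isOpen_univ
        ext x; simp [hp]
    have h1 : IsOpen {x : Set.Icc (-1:ℝ) 0 | (x : ℝ) < -1 + e} :=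
      IsOpen.preimage continuous_subtype_val isOpen_Iio
    have h2 : IsOpen {x : Set.Icc (-1:ℝ) 0 | -1 + 2*e < (x : ℝ) ∧ (x : ℝ) < -(2*e)} :=
      IsOpen.preimage continuous_subtype_val (IsOpen.inter isOpen_Ioi isOpen_Iio)
    have h3 : IsOpen {x : Set.Icc (-1:ℝ) 0 | -e < (x : ℝ)} :=
      IsOpen.preimage continuous_subtype_val isOpen_Ioi
    exact ((hop _ _ h1).inter ((hop _ _ h2).inter (hop _ _ h3)))
  · -- t belongs
    intro i
    refine ⟨fun hi => (hAmem i).mp hi, fun hi => (hBmem i).mp hi, fun hi => (hCmem i).mp hi⟩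
end
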